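/- Let (A, B, C, D, E, F, K) solve the Riccati ODE system on [0, T] and assume additionally that β_t + γ̇_t > 0 for all t ∈ [0, T]. Then for every t ∈ [0, T): A_t + λ_t B_t > max(D_t + λ_t E_t, 0) and B_t < min(E_t, 0). -/

import Mathlib

open Set MeasureTheory Matrix

/-- Market parameters: time horizon `T > 0` and bounded measurable coefficient functions
`β, λ, ε, θ, σ : [0,T] → ℝ` with `β > 0`, `σ ≥ 0`, `λ` and `ε` positive and bounded away
from zero, `λ` differentiable with bounded derivative `lam'`, and the no-arbitrage
condition `2β_t + γ̇_t > 0` where `γ = log λ` (so `γ̇ = λ'/λ`). -/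
structure Params where
  T : ℝ
  beta : ℝ → ℝ
  lam : ℝ → ℝ
  lam' : ℝ → ℝ
  eps : ℝ → ℝ
  theta : ℝ → ℝ
  sigma : ℝ → ℝ
  hT : 0 < T
  hbeta_meas : Measurable beta
  htheta_meas : Measurable theta
  hsigma_meas : Measurable sigma
  heps_meas : Measurable eps
  hbeta_bdd : ∃ M, ∀ t ∈ Icc 0 T, |beta t| ≤ M
  htheta_bdd : ∃ M, ∀ t ∈ Icc 0 T, |theta t| ≤ M
  hsigma_bdd : ∃ M, ∀ t ∈ Icc 0 T, |sigma t| ≤ M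
  hbeta_pos : ∀ t ∈ Icc 0 T, 0 < beta t
  hsigma_nonneg : ∀ t ∈ Icc 0 T, 0 ≤ sigma t
  heps_lb : ∃ c, 0 < c ∧ ∀ t ∈ Icc 0 T, c ≤ eps t
  heps_ub : ∃ M, ∀ t ∈ Icc 0 T, eps t ≤ M
  hlam_lb : ∃ c, 0 < c ∧ ∀ t ∈ Icc 0 T, c ≤ lam t
  hlam_ub : ∃ M, ∀ t ∈ Icc 0 T, lam t ≤ M
  hlam_deriv : ∀ t, HasDerivAt lam (lam' t) t
  hlam'_bdd : ∃ M, ∀ t, |lam' t| ≤ M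
  hnoarb : ∀ t ∈ Icc 0 T, 0 < 2 * beta t + lam' t / lam t

/-- `γ̇_t = λ'_t / λ_t`, the derivative of `γ = log λ`. -/
noncomputable def gammaDot (P : Params) (t : ℝ) : ℝ := P.lam' t / P.lam t

/-- The backward Riccati ODE system on `[0,T]` with its terminal conditions. -/
def IsRiccatiSol (P : Params) (A B C D E F K : ℝ → ℝ) : Prop :=
  (∀ t ∈ Icc (0:ℝ) P.T,
      HasDerivAt A ((P.eps t)⁻¹ * (A t + P.lam t * B t) ^ 2) t) ∧
  A P.T = P.lam P.T ∧
  (∀ t ∈ Icc (0:ℝ) P.T,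
      HasDerivAt B ((P.eps t)⁻¹ * (A t + P.lam t * B t) * (B t + P.lam t * C t)
        + P.beta t * B t) t) ∧
  B P.T = -1 ∧
  (∀ t ∈ Icc (0:ℝ) P.T,
      HasDerivAt C ((P.eps t)⁻¹ * (B t + P.lam t * C t) ^ 2 + 2 * P.beta t * C t
        - (P.lam t)⁻¹ * (2 * P.beta t + gammaDot P t)) t) ∧
  C P.T = (P.lam P.T)⁻¹ ∧
  (∀ t ∈ Icc (0:ℝ) P.T,
      HasDerivAt D ((P.eps t)⁻¹ * (A t + P.lam t * B t) * (D t + P.lam t * E t)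
        - P.theta t * (A t - D t)) t) ∧
  D P.T = 0 ∧
  (∀ t ∈ Icc (0:ℝ) P.T,
      HasDerivAt E ((P.eps t)⁻¹ * (B t + P.lam t * C t) * (D t + P.lam t * E t)
        - P.theta t * (B t - E t) + P.beta t * E t) t) ∧
  E P.T = 0 ∧
  (∀ t ∈ Icc (0:ℝ) P.T,
      HasDerivAt F ((P.eps t)⁻¹ * (D t + P.lam t * E t) ^ 2
        - 2 * P.theta t * (D t - F t)) t) ∧
  F P.T = 0 ∧
  (∀ t ∈ Icc (0:ℝ) P.T,
      HasDerivAt K (-(P.sigma t) ^ 2 * (A t - 2 * D t + F t) / 2) t) ∧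
  K P.T = 0

open Filter Topology

/-! Write `a = A + λB`, `b = B + λC`, `d = D + λE`. Using `λ' = λγ̇`, the system gives
* `(λC - 1)' = λε⁻¹b² + (2β + γ̇)(λC - 1)`,
* `b' = ε⁻¹b(a + λb) + βb + (β + γ̇)(λC - 1) - β`,
* `a' = ε⁻¹a(a + λb) + λ(β + γ̇)B` and `B' = ε⁻¹ab + βB`,
* `(a - d)' = (ε⁻¹(a + λb) + θ)(a - d) + λ(β + γ̇)(B - E)`,
* `(B - E)' = ε⁻¹b(a - d) + (β + θ)(B - E)`.

Going backwards from `T`: `λC - 1` vanishes at `T` and is nondecreasing where it is positive, so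
`λC ≤ 1`. Then `b(T) = 0` and `b' < 0` wherever `b = 0`, so `b > 0` on `[0, T)`. Finally each of
the pairs `(p, q) = (a, B)`, `(a - d, B - E)` equals `(0, -1)` at `T`. At the last time `r < T`
where one of the strict signs `p > 0`, `q < 0` fails, either `p(r) = 0 > q(r)`, and then
`p'(r) < 0` contradicts `p > 0` just after `r`; or `q(r) = 0`, and then `q' ≥ Mq` for a bound `M`
of `β` (resp. `β + θ`), since `p ≥ 0` and `b > 0`, keeps `q ≥ 0` up to `T` by Grönwall,
contradicting `q(T) = -1`.
-/

theorem HasDerivAt.eventually_lt_left_of_neg {f : ℝ → ℝ} {f' x : ℝ} (hf : HasDerivAt f f' x)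
    (hf' : f' < 0) : ∀ᶠ t in 𝓝[<] x, f x < f t := by
  filter_upwards [(hasDerivAt_iff_tendsto_slope_left_right.1 hf).1.eventually_lt_const hf',
    self_mem_nhdsWithin] with t hslope (ht : t < x)
  rw [slope_def_field, div_lt_iff_of_neg (sub_neg.2 ht)] at hslope
  linarith

theorem HasDerivAt.eventually_lt_right_of_neg {f : ℝ → ℝ} {f' x : ℝ}
    (hf : HasDerivAt f f' x) (hf' : f' < 0) : ∀ᶠ t in 𝓝[>] x, f t < f x := by
  filter_upwards [(hasDerivAt_iff_tendsto_slope_left_right.1 hf).2.eventually_lt_const hf',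
    self_mem_nhdsWithin] with t hslope (ht : x < t)
  rw [slope_def_field, div_lt_iff₀ (sub_pos.2 ht)] at hslope
  linarith

-- `g` can only meet the barriers `δ * exp ((|K| + 1) * (s - b))` with a strictly smaller slope.
theorem image_nonpos_of_deriv_right_le_mul {g g' : ℝ → ℝ} {a b K : ℝ}
    (hg : ContinuousOn g (Icc a b)) (hg' : ∀ t ∈ Ico a b, HasDerivWithinAt g (g' t) (Ici t) t)
    (ha : g a ≤ 0) (bound : ∀ t ∈ Ico a b, 0 < g t → g' t ≤ K * g t) :
    ∀ ⦃t⦄, t ∈ Icc a b → g t ≤ 0 := by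
  intro t ht
  refine le_of_forall_pos_le_add fun δ hδ => ?_
  set L := |K| + 1
  set barrier := fun s => δ * Real.exp (L * (s - b))
  have hbarrier : ∀ s, HasDerivAt barrier (L * barrier s) s := fun s => by
    have := (((hasDerivAt_id' s).sub_const b).const_mul L).exp.const_mul δ
    exact this.congr_deriv (by ring)
  have hcomp := image_le_of_deriv_right_lt_deriv_boundary' hg hg'
    (ha.trans (by positivity)) (fun s _ => (hbarrier s).continuousAt.continuousWithinAt)
    (fun s _ => (hbarrier s).hasDerivWithinAt) (fun s hs hgs => by
      have hpos : 0 < g s := hgs ▸ by positivity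
      calc g' s ≤ K * g s := bound s hs hpos
        _ < L * barrier s := by
          rw [← hgs]; nlinarith [le_abs_self K])
    ht
  calc g t ≤ barrier t := hcomp
    _ ≤ δ * 1 := by
      show δ * Real.exp _ ≤ δ * 1
      gcongr
      exact Real.exp_le_one_iff.2 (by nlinarith [abs_nonneg K, ht.2])
    _ = 0 + δ := by ring

theorem image_nonpos_of_mul_le_deriv_of_terminal {g g' : ℝ → ℝ} {a b K : ℝ}
    (hg : ∀ t ∈ Icc a b, HasDerivAt g (g' t) t) (hb : g b ≤ 0)
    (bound : ∀ t ∈ Ioc a b, 0 < g t → K * g t ≤ g' t) :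
    ∀ t ∈ Icc a b, g t ≤ 0 := by
  have reflect : ∀ s ∈ Icc a b, a + b - s ∈ Icc a b :=
    fun s hs => ⟨by linarith [hs.2], by linarith [hs.1]⟩
  have hderiv : ∀ s ∈ Icc a b, HasDerivAt (fun s => g (a + b - s)) (-g' (a + b - s)) s :=
    fun s hs => HasDerivAt.comp_const_sub (a + b) s (hg _ (reflect s hs))
  have hreflected := image_nonpos_of_deriv_right_le_mul (g := fun s => g (a + b - s)) (K := -K)
    (fun s hs => (hderiv s hs).continuousAt.continuousWithinAt)
    (fun s hs => (hderiv s (Ico_subset_Icc_self hs)).hasDerivWithinAt) (by simpa using hb)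
    (fun s hs hpos => by
      have := bound _ ⟨by linarith [hs.2], by linarith [hs.1]⟩ hpos
      linarith)
  intro t ht
  simpa using hreflected (reflect t ht)

theorem exists_last_zero_of_nonpos {g : ℝ → ℝ} {a u b : ℝ} (hau : a ≤ u) (hub : u < b)
    (hg : ContinuousOn g (Icc a b)) (ha : g a ≤ 0) (hpos : ∀ t ∈ Ioo u b, 0 < g t) :
    ∃ r ∈ Ico a b, g r = 0 ∧ ∀ t ∈ Ioo r b, 0 < g t := by
  set S := Icc a u ∩ g ⁻¹' Iic 0
  have hS : IsCompact S := isCompact_Icc.of_isClosed_subset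
    ((hg.mono (Icc_subset_Icc_right hub.le)).preimage_isClosed_of_isClosed isClosed_Icc
      isClosed_Iic) inter_subset_left
  obtain ⟨⟨har, hru⟩, hr0⟩ : sSup S ∈ S := hS.sSup_mem ⟨a, left_mem_Icc.2 hau, ha⟩
  set r := sSup S
  have hrb : r < b := hru.trans_lt hub
  have hpos' : ∀ t ∈ Ioo r b, 0 < g t := by
    intro t ht
    rcases le_or_gt t u with htu | htu
    · by_contra! hle
      exact ht.1.not_ge (le_csSup hS.bddAbove ⟨⟨har.trans ht.1.le, htu⟩, hle⟩)
    · exact hpos t ⟨htu, ht.2⟩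
  refine ⟨r, ⟨har, hrb⟩, le_antisymm hr0 ?_, hpos'⟩
  have hcont : ContinuousWithinAt g (Ioo r b) r :=
    (hg r ⟨har, hrb.le⟩).mono (Ioo_subset_Icc_self.trans (Icc_subset_Icc_left har))
  rw [ContinuousWithinAt, nhdsWithin_Ioo_eq_nhdsGT hrb] at hcont
  exact ge_of_tendsto hcont (by
    filter_upwards [Ioo_mem_nhdsGT hrb] with t ht using (hpos' t ht).le)

theorem pos_and_neg_of_terminal {p q p' q' : ℝ → ℝ} {a b K : ℝ}
    (hp : ∀ t ∈ Icc a b, HasDerivAt p (p' t) t) (hq : ∀ t ∈ Icc a b, HasDerivAt q (q' t) t)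
    (hpb : p b = 0) (hqb : q b < 0)
    (hp' : ∀ t ∈ Icc a b, p t = 0 → q t < 0 → p' t < 0)
    (hq' : ∀ t ∈ Ico a b, 0 ≤ p t → q t < 0 → K * q t ≤ q' t) :
    ∀ t ∈ Ico a b, 0 < p t ∧ q t < 0 := by
  intro t₀ ht₀
  have hb : b ∈ Icc a b := right_mem_Icc.2 (ht₀.1.trans ht₀.2.le)
  set m := fun t => min (p t) (-q t)
  suffices 0 < m t₀ from ⟨(lt_min_iff.1 this).1, neg_pos.1 (lt_min_iff.1 this).2⟩
  by_contra! hm₀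
  have hnear : ∀ᶠ t in 𝓝[<] b, 0 < m t := by
    filter_upwards [(hp b hb).eventually_lt_left_of_neg (hp' b hb hpb hqb),
      nhdsWithin_le_nhds ((hq b hb).continuousAt.eventually_lt_const hqb)] with t hpt hqt
    exact lt_min (hpb ▸ hpt) (neg_pos.2 hqt)
  obtain ⟨l, hl, hlb⟩ := mem_nhdsLT_iff_exists_Ioo_subset.1 hnear
  have hsub₀ : ∀ t ∈ Icc t₀ b, t ∈ Icc a b := fun t ht => ⟨ht₀.1.trans ht.1, ht.2⟩
  obtain ⟨r, ⟨hr₀, hrb⟩, hmr, hmpos⟩ := exists_last_zero_of_nonpos (le_max_right l t₀)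
    (max_lt hl ht₀.2)
    (fun t ht => ContinuousAt.continuousWithinAt (f := m)
      ((hp t (hsub₀ t ht)).continuousAt.min (hq t (hsub₀ t ht)).continuousAt.neg))
    hm₀ (fun t ht => hlb ⟨(le_max_left l t₀).trans_lt ht.1, ht.2⟩)
  have hr : r ∈ Icc a b := ⟨ht₀.1.trans hr₀, hrb.le⟩
  have hpr : 0 ≤ p r := hmr ▸ min_le_left (p r) (-q r)
  have hqr : 0 ≤ -q r := hmr ▸ min_le_right (p r) (-q r)
  rcases (neg_nonneg.1 hqr).eq_or_lt with hq₀ | hqneg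
  · have hsub : ∀ t ∈ Icc r b, t ∈ Icc a b := fun t ht => ⟨hr.1.trans ht.1, ht.2⟩
    have hpnonneg : ∀ t ∈ Ico r b, 0 ≤ p t := fun t ht =>
      ht.1.eq_or_lt.elim (fun h => h ▸ hpr) fun h => (lt_min_iff.1 (hmpos t ⟨h, ht.2⟩)).1.le
    have := image_nonpos_of_deriv_right_le_mul (g := fun t => -q t) (g' := fun t => -q' t)
      (fun t ht => (hq t (hsub t ht)).continuousAt.neg.continuousWithinAt)
      (fun t ht => (hq t (hsub t (Ico_subset_Icc_self ht))).neg.hasDerivWithinAt)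
      (by simp [hq₀])
      (fun t ht hpos => by
        have := hq' t ⟨hr.1.trans ht.1, ht.2⟩ (hpnonneg t ht) (neg_pos.1 hpos)
        linarith)
      (right_mem_Icc.2 hrb.le)
    linarith
  · have hp₀ : p r = 0 :=
      hpr.eq_or_lt.elim Eq.symm fun h => ((lt_min h (neg_pos.2 hqneg)).ne' hmr).elim
    obtain ⟨t, hpt, ht⟩ := (((hp r hr).eventually_lt_right_of_neg (hp' r hr hp₀ hqneg)).and
      (Ioo_mem_nhdsGT hrb)).exists
    linarith [(lt_min_iff.1 (hmpos t ht)).1]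

theorem pos_of_terminal {p p' : ℝ → ℝ} {a b : ℝ}
    (hp : ∀ t ∈ Icc a b, HasDerivAt p (p' t) t) (hpb : p b = 0)
    (hp' : ∀ t ∈ Icc a b, p t = 0 → p' t < 0) :
    ∀ t ∈ Ico a b, 0 < p t := fun t ht =>
  (pos_and_neg_of_terminal (q := fun _ => -1) (q' := fun _ => 0) (K := 0) hp
    (fun t _ => hasDerivAt_const t (-1)) hpb (by norm_num) (fun t ht h _ => hp' t ht h)
    (fun _ _ _ _ => by norm_num) t ht).1

namespace Params

variable (P : Params) {t : ℝ}

theorem lam_pos (ht : t ∈ Icc 0 P.T) : 0 < P.lam t :=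
  let ⟨_, hc, hlb⟩ := P.hlam_lb
  hc.trans_le (hlb t ht)

theorem eps_pos (ht : t ∈ Icc 0 P.T) : 0 < P.eps t :=
  let ⟨_, hc, hlb⟩ := P.heps_lb
  hc.trans_le (hlb t ht)

theorem exists_beta_le : ∃ M, ∀ t ∈ Icc 0 P.T, P.beta t ≤ M :=
  let ⟨M, hM⟩ := P.hbeta_bdd
  ⟨M, fun t ht => (le_abs_self _).trans (hM t ht)⟩

theorem exists_theta_le : ∃ M, ∀ t ∈ Icc 0 P.T, P.theta t ≤ M :=
  let ⟨M, hM⟩ := P.htheta_bdd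
  ⟨M, fun t ht => (le_abs_self _).trans (hM t ht)⟩

theorem lam_mul_gammaDot (ht : t ∈ Icc 0 P.T) : P.lam t * gammaDot P t = P.lam' t :=
  mul_div_cancel₀ _ (P.lam_pos ht).ne'

theorem lam_mul_beta_add_lam'_pos (hstrong : ∀ t ∈ Icc 0 P.T, 0 < P.beta t + gammaDot P t)
    (ht : t ∈ Icc 0 P.T) : 0 < P.lam t * P.beta t + P.lam' t := by
  rw [← P.lam_mul_gammaDot ht, ← mul_add]
  exact mul_pos (P.lam_pos ht) (hstrong t ht)

end Params

namespace IsRiccatiSol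

variable {P : Params} {A B C D E F K : ℝ → ℝ}

theorem lam_mul_C_le_one (hsol : IsRiccatiSol P A B C D E F K) :
    ∀ t ∈ Icc 0 P.T, P.lam t * C t ≤ 1 := by
  obtain ⟨-, -, -, -, hC, hCT, -⟩ := hsol
  have hT : P.T ∈ Icc 0 P.T := right_mem_Icc.2 P.hT.le
  have := image_nonpos_of_mul_le_deriv_of_terminal (g := fun t => P.lam t * C t - 1) (K := 0)
    (fun t ht => ((P.hlam_deriv t).mul (hC t ht)).sub_const 1)
    (by simp [hCT, mul_inv_cancel₀ (P.lam_pos hT).ne'])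
    (fun t ht hpos => by
      have ht : t ∈ Icc 0 P.T := Ioc_subset_Icc_self ht
      have hlam := P.lam_pos ht
      have hsq : 0 ≤ P.lam t * (P.eps t)⁻¹ * (B t + P.lam t * C t) ^ 2 := by
        have := P.eps_pos ht
        positivity
      have hprod : 0 ≤ (2 * P.beta t + gammaDot P t) * (P.lam t * C t - 1) :=
        mul_nonneg (P.hnoarb t ht).le hpos.le
      linear_combination hsq + hprod + C t * P.lam_mul_gammaDot ht
        + (2 * P.beta t + gammaDot P t) * mul_inv_cancel₀ hlam.ne')
  exact fun t ht => by linarith [this t ht]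

theorem B_add_lam_mul_C_pos (hsol : IsRiccatiSol P A B C D E F K)
    (hstrong : ∀ t ∈ Icc 0 P.T, 0 < P.beta t + gammaDot P t) :
    ∀ t ∈ Ico 0 P.T, 0 < B t + P.lam t * C t := by
  have hC1 := hsol.lam_mul_C_le_one
  obtain ⟨-, -, hB, hBT, hC, hCT, -⟩ := hsol
  have hT : P.T ∈ Icc 0 P.T := right_mem_Icc.2 P.hT.le
  refine pos_of_terminal (fun t ht => (hB t ht).add ((P.hlam_deriv t).mul (hC t ht)))
    (by rw [hBT, hCT, mul_inv_cancel₀ (P.lam_pos hT).ne']; norm_num) fun t ht h0 => ?_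
  have hnonpos : (P.beta t + gammaDot P t) * (P.lam t * C t - 1) ≤ 0 :=
    mul_nonpos_of_nonneg_of_nonpos (hstrong t ht).le (by linarith [hC1 t ht])
  linear_combination hnonpos + P.hbeta_pos t ht
    + ((P.eps t)⁻¹ * (A t + P.lam t * B t + P.lam t * (B t + P.lam t * C t)) + P.beta t) * h0
    - C t * P.lam_mul_gammaDot ht
    - (2 * P.beta t + gammaDot P t) * mul_inv_cancel₀ (P.lam_pos ht).ne'

theorem A_add_lam_mul_B_pos_and_B_neg (hsol : IsRiccatiSol P A B C D E F K)
    (hstrong : ∀ t ∈ Icc 0 P.T, 0 < P.beta t + gammaDot P t) :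
    ∀ t ∈ Ico 0 P.T, 0 < A t + P.lam t * B t ∧ B t < 0 := by
  have hb := hsol.B_add_lam_mul_C_pos hstrong
  obtain ⟨hA, hAT, hB, hBT, -⟩ := hsol
  obtain ⟨M, hM⟩ := P.exists_beta_le
  refine pos_and_neg_of_terminal (K := M)
    (fun t ht => (hA t ht).add ((P.hlam_deriv t).mul (hB t ht))) hB (by rw [hAT, hBT]; ring)
    (by rw [hBT]; norm_num) (fun t ht h0 hq => ?_) fun t ht hp hq => ?_
  · have hneg := mul_neg_of_pos_of_neg (P.lam_mul_beta_add_lam'_pos hstrong ht) hq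
    linear_combination hneg
      + (P.eps t)⁻¹ * (A t + P.lam t * B t + P.lam t * (B t + P.lam t * C t)) * h0
  · have ht' := Ico_subset_Icc_self ht
    have hcross : 0 ≤ (P.eps t)⁻¹ * (A t + P.lam t * B t) * (B t + P.lam t * C t) :=
      mul_nonneg (mul_nonneg (inv_pos.2 (P.eps_pos ht')).le hp) (hb t ht).le
    have hbeta : 0 ≤ (M - P.beta t) * -B t :=
      mul_nonneg (sub_nonneg.2 (hM t ht')) (neg_nonneg.2 hq.le)
    linear_combination hcross + hbeta

theorem sub_D_add_lam_mul_E_pos_and_B_sub_E_neg (hsol : IsRiccatiSol P A B C D E F K)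
    (hstrong : ∀ t ∈ Icc 0 P.T, 0 < P.beta t + gammaDot P t) :
    ∀ t ∈ Ico 0 P.T,
      0 < A t + P.lam t * B t - (D t + P.lam t * E t) ∧ B t - E t < 0 := by
  have hb := hsol.B_add_lam_mul_C_pos hstrong
  obtain ⟨hA, hAT, hB, hBT, -, -, hD, hDT, hE, hET, -⟩ := hsol
  obtain ⟨Mβ, hMβ⟩ := P.exists_beta_le
  obtain ⟨Mθ, hMθ⟩ := P.exists_theta_le
  refine pos_and_neg_of_terminal (K := Mβ + Mθ)
    (fun t ht => ((hA t ht).add ((P.hlam_deriv t).mul (hB t ht))).sub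
      ((hD t ht).add ((P.hlam_deriv t).mul (hE t ht))))
    (fun t ht => (hB t ht).sub (hE t ht)) (by rw [hAT, hBT, hDT, hET]; ring)
    (by rw [hBT, hET]; norm_num) (fun t ht h0 hq => ?_) fun t ht hp hq => ?_
  · have hneg := mul_neg_of_pos_of_neg (P.lam_mul_beta_add_lam'_pos hstrong ht) hq
    linear_combination hneg + ((P.eps t)⁻¹ * (A t + P.lam t * B t
      + P.lam t * (B t + P.lam t * C t)) + P.theta t) * h0
  · have ht' := Ico_subset_Icc_self ht
    have hcross : 0 ≤ (P.eps t)⁻¹ * (B t + P.lam t * C t)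
        * (A t + P.lam t * B t - (D t + P.lam t * E t)) :=
      mul_nonneg (mul_nonneg (inv_pos.2 (P.eps_pos ht')).le (hb t ht).le) hp
    have hrate : 0 ≤ (Mβ + Mθ - P.beta t - P.theta t) * -(B t - E t) :=
      mul_nonneg (by linarith [hMβ t ht', hMθ t ht']) (neg_nonneg.2 hq.le)
    linear_combination hcross + hrate

end IsRiccatiSol

/-- If additionally `β_t + γ̇_t > 0` on `[0,T]`, then for every
`t ∈ [0,T)`: `A_t + λ_t B_t > max(D_t + λ_t E_t, 0)` and `B_t < min(E_t, 0)`. -/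
theorem riccati_strict_inequalities (P : Params)
    (hstrong : ∀ t ∈ Icc (0:ℝ) P.T, 0 < P.beta t + gammaDot P t)
    (A B C D E F K : ℝ → ℝ) (hsol : IsRiccatiSol P A B C D E F K) :
    ∀ t ∈ Ico (0:ℝ) P.T,
      max (D t + P.lam t * E t) 0 < A t + P.lam t * B t ∧
      B t < min (E t) 0 := by
  intro t ht
  obtain ⟨ha, hB⟩ := hsol.A_add_lam_mul_B_pos_and_B_neg hstrong t ht
  obtain ⟨hx, hy⟩ := hsol.sub_D_add_lam_mul_E_pos_and_B_sub_E_neg hstrong t ht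
  exact ⟨max_lt (by linarith) ha, lt_min (by linarith) hB⟩
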